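/- For every CNF φ with n = |vars(φ)| variables and weight function w: vars(φ) → ℕ, there exists a CNF φ' whose variable set contains vars(φ) such that the number of satisfying assignments of φ' equals Σ_{β ⊨ φ} 2^{w(β)·(n+1)}, where the sum ranges over all satisfying assignments β of φ, and itw(φ') ≤ itw(φ) + 1. -/

import Mathlib

open scoped Classical

/-- A literal: a propositional variable (indexed by a natural number) or its negation. -/
structure Lit where
  var : ℕ
  pos : Bool
deriving DecidableEq

/-- A clause is a finite set of literals. -/
abbrev Clause := Finset Lit

/-- The variables occurring in a clause. -/
def Clause.varsOf (c : Clause) : Finset ℕ := c.image Lit.var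

/-- A weighted CNF: a finite set of clauses with weights in `ℕ ∪ {∞}`. -/
structure WCNF where
  clauses : Finset Clause
  weight : Clause → ℕ∞

/-- An assignment satisfies a literal. -/
def satLit (β : ℕ → Bool) (l : Lit) : Prop := β l.var = l.pos

/-- An assignment satisfies a clause if it makes some literal true. -/
def satClause (β : ℕ → Bool) (c : Clause) : Prop := ∃ l ∈ c, satLit β l

/-- The cost of an assignment: sum of the weights of the falsified clauses. -/
noncomputable def WCNF.costA (φ : WCNF) (β : ℕ → Bool) : ℕ∞ :=
  ∑ c ∈ φ.clauses.filter (fun c => ¬ satClause β c), φ.weight c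

/-- The cost of a WCNF: the minimum cost over all assignments. -/
noncomputable def WCNF.cost (φ : WCNF) : ℕ∞ := ⨅ β : ℕ → Bool, φ.costA β

/-- The variables of a set of clauses. -/
def cnfVars (C : Finset Clause) : Finset ℕ := C.biUnion Clause.varsOf

/-- The variables of a WCNF. -/
def WCNF.vars (φ : WCNF) : Finset ℕ := cnfVars φ.clauses

/-- The primal graph of a set of clauses: vertices are the variables (all of `ℕ`),
with an edge between distinct variables occurring together in a clause. -/
def primalOf (C : Finset Clause) : SimpleGraph ℕ :=
  SimpleGraph.fromRel (fun u v => ∃ c ∈ C, u ∈ c.varsOf ∧ v ∈ c.varsOf)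

/-- The incidence graph of a set of clauses: the bipartite graph on variables and
clauses joining each clause to the variables it contains. -/
def incOf (C : Finset Clause) : SimpleGraph (ℕ ⊕ Clause) :=
  SimpleGraph.fromRel (fun a b =>
    ∃ x c, a = Sum.inl x ∧ b = Sum.inr c ∧ c ∈ C ∧ x ∈ c.varsOf)

/-- A tree decomposition of a graph `G`: a tree `TG` together with finite bags such that
every vertex occurs in some bag, every edge is covered by a bag, and for each vertex the
nodes whose bags contain it induce a nonempty connected subgraph (hence a subtree). -/
structure TreeDecomp {V T : Type} (G : SimpleGraph V) (TG : SimpleGraph T) where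
  isTree : TG.IsTree
  bag : T → Finset V
  covers_vertex : ∀ v : V, ∃ t, v ∈ bag t
  covers_edge : ∀ u v : V, G.Adj u v → ∃ t, u ∈ bag t ∧ v ∈ bag t
  connected : ∀ v : V, (TG.induce {t | v ∈ bag t}).Connected

/-- `G` has a tree decomposition of width at most `k`. -/
def HasTD {V : Type} (G : SimpleGraph V) (k : ℕ) : Prop :=
  ∃ (T : Type) (TG : SimpleGraph T) (D : TreeDecomp G TG), ∀ t, (D.bag t).card ≤ k + 1

/-- The treewidth of a graph: the minimum width of a tree decomposition (`⊤` if none). -/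
noncomputable def tw {V : Type} (G : SimpleGraph V) : ℕ∞ :=
  sInf {x : ℕ∞ | ∃ k : ℕ, x = k ∧ HasTD G k}

/-- The primal treewidth of a WCNF. -/
noncomputable def WCNF.tw (φ : WCNF) : ℕ∞ := _root_.tw (primalOf φ.clauses)

/-- The incidence treewidth of a WCNF. -/
noncomputable def WCNF.itw (φ : WCNF) : ℕ∞ := _root_.tw (incOf φ.clauses)

/-- A (monotone) weighted CNF with integer weights. -/
structure ZWCNF where
  clauses : Finset Clause
  weight : Clause → ℤ

/-- Cost of an assignment for an integer-weighted CNF. -/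
noncomputable def ZWCNF.costA (φ : ZWCNF) (β : ℕ → Bool) : ℤ :=
  ∑ c ∈ φ.clauses.filter (fun c => ¬ satClause β c), φ.weight c

/-- `v` is the minimum cost of `φ`. -/
def ZWCNF.IsMinCost (φ : ZWCNF) (v : ℤ) : Prop :=
  (∃ β, φ.costA β = v) ∧ ∀ β, v ≤ φ.costA β

/-- A formula is monotone if every literal occurring in it is negative. -/
def ZWCNF.Mono (φ : ZWCNF) : Prop := ∀ c ∈ φ.clauses, ∀ l ∈ c, l.pos = false

noncomputable def ZWCNF.tw (φ : ZWCNF) : ℕ∞ := _root_.tw (primalOf φ.clauses)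

noncomputable def ZWCNF.itw (φ : ZWCNF) : ℕ∞ := _root_.tw (incOf φ.clauses)

/-- A QUBO instance: `H(x) = Σ_i lin i * x_i + Σ_{i<j} quad i j * x_i x_j`
with integer weights supported on a finite set of variables. -/
structure QUBO where
  vars : Finset ℕ
  lin : ℕ → ℤ
  quad : ℕ → ℕ → ℤ
  lin_supp : ∀ i, lin i ≠ 0 → i ∈ vars
  quad_supp : ∀ i j, quad i j ≠ 0 → i ∈ vars ∧ j ∈ vars
  quad_lt : ∀ i j, quad i j ≠ 0 → i < j

/-- Value of a Boolean, identifying `true` with `1` and `false` with `0`. -/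
def bval (b : Bool) : ℤ := if b then 1 else 0

/-- Evaluation of a QUBO Hamiltonian on a `{0,1}`-assignment. -/
def QUBO.eval (H : QUBO) (x : ℕ → Bool) : ℤ :=
  (∑ i ∈ H.vars, H.lin i * bval (x i)) +
    ∑ i ∈ H.vars, ∑ j ∈ H.vars, H.quad i j * bval (x i) * bval (x j)

/-- A ground state: an assignment minimizing `H`. -/
def QUBO.IsGround (H : QUBO) (x : ℕ → Bool) : Prop := ∀ y, H.eval x ≤ H.eval y

/-- `μ` is the minimum value of `H`. -/
def QUBO.IsMinVal (H : QUBO) (μ : ℤ) : Prop :=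
  (∃ x, H.eval x = μ) ∧ ∀ x, μ ≤ H.eval x

/-- The primal graph of a QUBO: an edge `{i,j}` whenever the quadratic weight is nonzero. -/
def QUBO.primal (H : QUBO) : SimpleGraph ℕ :=
  SimpleGraph.fromRel (fun i j => H.quad i j ≠ 0)

/-- The incidence graph of a QUBO: bipartite graph on variables and nonzero terms
(linear terms indexed by a variable, quadratic terms by a pair of variables). -/
def QUBO.inc (H : QUBO) : SimpleGraph (ℕ ⊕ (ℕ ⊕ ℕ × ℕ)) :=
  SimpleGraph.fromRel (fun a b =>
    (∃ i, a = Sum.inl i ∧ b = Sum.inr (Sum.inl i) ∧ H.lin i ≠ 0) ∨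
    (∃ x i j, a = Sum.inl x ∧ b = Sum.inr (Sum.inr (i, j)) ∧ H.quad i j ≠ 0 ∧ (x = i ∨ x = j)))

noncomputable def QUBO.tw (H : QUBO) : ℕ∞ := _root_.tw H.primal

noncomputable def QUBO.itw (H : QUBO) : ℕ∞ := _root_.tw H.inc

/-- An assignment satisfies an (unweighted) CNF if it satisfies every clause. -/
def satCNF (β : ℕ → Bool) (φ : Finset Clause) : Prop := ∀ c ∈ φ, satClause β c

/-- The weight of an assignment: the sum of weights of the variables set to true. -/
noncomputable def wOf (φ : Finset Clause) (w : ℕ → ℕ) (β : ℕ → Bool) : ℕ :=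
  ∑ x ∈ (cnfVars φ).filter (fun x => β x = true), w x

/-- The satisfying assignments of a CNF, represented as the subsets of its variable set
consisting of the variables set to true. -/
noncomputable def satSets (φ : Finset Clause) : Finset (Finset ℕ) :=
  (cnfVars φ).powerset.filter (fun S => ∀ c ∈ φ, ∃ l ∈ c, ((l.var ∈ S) ↔ l.pos = true))

/-! Add, for every variable `x` of `φ`, fresh variables `y` (`w x · (n + 1)` of them) together
with the clauses `¬y ∨ x`. A model `S` of `φ` extends to a model of the new formula exactly by the
subsets of the fresh variables hanging off `S`, so it accounts for `2 ^ (w(S) · (n + 1))` models.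
In the incidence graph, `y` and its clause form a gadget meeting the old graph only in `x`: a leaf
bag `{x, y, ¬y ∨ x}` hung from a bag containing `x` covers it. Such a bag has width `2`, and the
width of the old decomposition is already at least `1` once `φ` has a variable. -/

namespace SimpleGraph

variable {T P : Type} {TG : SimpleGraph T} {s : P → T}

def attachLeaves (TG : SimpleGraph T) (s : P → T) : SimpleGraph (T ⊕ P) where
  Adj
    | .inl t, .inl t' => TG.Adj t t'
    | .inl t, .inr p => t = s p
    | .inr p, .inl t => t = s p
    | .inr _, .inr _ => False
  symm := ⟨by rintro (t | p) (t' | p') h <;> simp_all [TG.adj_comm]⟩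
  loopless := ⟨by rintro (t | p) h <;> simp_all⟩

@[simp] lemma attachLeaves_adj_inl_inl {t t' : T} :
    (attachLeaves TG s).Adj (.inl t) (.inl t') ↔ TG.Adj t t' := Iff.rfl

@[simp] lemma attachLeaves_adj_inl_inr {t : T} {p : P} :
    (attachLeaves TG s).Adj (.inl t) (.inr p) ↔ t = s p := Iff.rfl

@[simp] lemma attachLeaves_adj_inr_inl {t : T} {p : P} :
    (attachLeaves TG s).Adj (.inr p) (.inl t) ↔ t = s p := Iff.rfl

lemma eq_of_attachLeaves_adj_inr {p : P} {b : T ⊕ P} (h : (attachLeaves TG s).Adj (.inr p) b) :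
    b = .inl (s p) := by
  rcases b with t | q
  · exact congrArg Sum.inl h
  · exact h.elim

def attachLeavesInl (TG : SimpleGraph T) (s : P → T) : TG ↪g attachLeaves TG s where
  toEmbedding := .inl
  map_rel_iff' := Iff.rfl

lemma attachLeaves_connected (hT : TG.Connected) : (attachLeaves TG s).Connected := by
  have : Nonempty T := hT.nonempty
  have toBase : ∀ c, (attachLeaves TG s).Reachable c (.inl (Sum.elim id s c)) := by
    rintro (t | p)
    · rfl
    · exact Adj.reachable (by simp)
  refine ⟨fun a b => ((toBase a).trans ?_).trans (toBase b).symm⟩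
  exact (hT.preconnected _ _).map (attachLeavesInl TG s).toHom

lemma attachLeaves_isAcyclic (hT : TG.IsAcyclic) : (attachLeaves TG s).IsAcyclic := by
  intro v c hc
  by_cases hleaf : ∃ p, Sum.inr p ∈ c.support
  · -- both neighbours of a leaf on a cycle would be its unique neighbour
    obtain ⟨p, hp⟩ := hleaf
    have hc' := hc.rotate hp
    refine hc'.snd_ne_penultimate ?_
    rw [eq_of_attachLeaves_adj_inr (Walk.adj_snd hc'.not_nil),
      eq_of_attachLeaves_adj_inr (Walk.adj_penultimate hc'.not_nil).symm]
  · push Not at hleaf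
    have hsupp : ∀ x ∈ c.support, x ∈ Set.range Sum.inl := by
      rintro (t | p) hx
      · exact ⟨t, rfl⟩
      · exact absurd hx (hleaf p)
    have hcyc : (c.induce (Set.range Sum.inl) hsupp).IsCycle := by
      rwa [← Walk.isCycle_map_iff_of_injective (f := (Embedding.induce _).toHom)
        Subtype.val_injective, Walk.map_induce]
    refine hT.comap ⟨fun x => Sum.elim id s x.1, ?_⟩ ?_ _ hcyc
    · rintro ⟨_, t, rfl⟩ ⟨_, t', rfl⟩ h
      simpa using h
    · rintro ⟨_, t, rfl⟩ ⟨_, t', rfl⟩ (rfl : t = t')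
      rfl

lemma IsTree.attachLeaves (hT : TG.IsTree) : (attachLeaves TG s).IsTree :=
  ⟨attachLeaves_connected hT.connected, attachLeaves_isAcyclic hT.isAcyclic⟩

lemma induce_singleton_connected {V : Type} (G : SimpleGraph V) (v : V) :
    (G.induce {v}).Connected := by
  rw [induce_singleton_eq_top]
  exact connected_top

lemma attachLeaves_induce_connected {A : Set T} {Q : Set P} (hA : (TG.induce A).Connected)
    (hQ : ∀ q ∈ Q, s q ∈ A) :
    ((attachLeaves TG s).induce (Sum.inl '' A ∪ Sum.inr '' Q)).Connected := by
  have hA' : ((attachLeaves TG s).induce (Sum.inl '' A)).Connected :=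
    (Iso.connected_iff ⟨Equiv.Set.image _ A Sum.inl_injective,
      by simp [Equiv.Set.image, Equiv.Set.imageOfInjOn]⟩).1 hA
  obtain ⟨t₀, ht₀⟩ := hA.nonempty
  refine induce_connected_of_patches (.inl t₀) (.inl ⟨t₀, ht₀, rfl⟩) ?_
  rintro _ (⟨t, ht, rfl⟩ | ⟨q, hq, rfl⟩)
  · exact ⟨_, Set.subset_union_left, ⟨t₀, ht₀, rfl⟩, ⟨t, ht, rfl⟩, hA'.preconnected _ _⟩
  · have hleaf : ((attachLeaves TG s).induce (Sum.inl '' A ∪ {.inr q})).Connected :=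
      connected_induce_union hA'.preconnected (induce_singleton_connected _ _).preconnected
        ⟨s q, hQ q hq, rfl⟩ rfl (by simp)
    exact ⟨_, Set.union_subset_union_right _ (Set.singleton_subset_iff.2 ⟨q, hq, rfl⟩),
      .inl ⟨t₀, ht₀, rfl⟩, Set.mem_union_right _ rfl, hleaf.preconnected _ _⟩

end SimpleGraph

section TreeDecomposition

variable {V : Type} {G : SimpleGraph V}

lemma HasTD.mono {k m : ℕ} (h : HasTD G k) (hkm : k ≤ m) : HasTD G m := by
  obtain ⟨T, TG, D, hD⟩ := h
  exact ⟨T, TG, D, fun t => (hD t).trans (by omega)⟩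

lemma HasTD.one_le_of_adj {k : ℕ} (h : HasTD G k) {u v : V} (huv : G.Adj u v) : 1 ≤ k := by
  obtain ⟨T, TG, D, hD⟩ := h
  obtain ⟨t, hu, hv⟩ := D.covers_edge u v huv
  have : ({u, v} : Finset V).card ≤ k + 1 :=
    (Finset.card_le_card (by simp [Finset.insert_subset_iff, hu, hv])).trans (hD t)
  rw [Finset.card_pair huv.ne] at this
  omega

lemma tw_le_tw_add {V' : Type} {G' : SimpleGraph V'} (m : ℕ)
    (h : ∀ k, HasTD G k → HasTD G' (k + m)) : tw G' ≤ tw G + m := by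
  unfold tw
  rw [ENat.sInf_add]
  refine le_iInf₂ ?_
  rintro _ ⟨k, rfl, hk⟩
  exact sInf_le ⟨k + m, by push_cast; rfl, h k hk⟩

/-- Old bags drop the gadget vertices, and gadget `p` gets a leaf bag `{a p} ∪ N p`, hung from a
node whose bag contains its anchor `a p`. -/
theorem HasTD.attachGadgets [DecidableEq V] {P : Type} {G' : SimpleGraph V} {k : ℕ} (hG : HasTD G k)
    (a : P → V) (N : P → Finset V)
    (hN : ∀ p q v, v ∈ N p → v ∈ N q → p = q) (ha : ∀ p q, a p ∉ N q)
    (hadj : ∀ u v, G'.Adj u v → (∃ p, u ∈ insert (a p) (N p) ∧ v ∈ insert (a p) (N p)) ∨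
      (G.Adj u v ∧ (∀ p, u ∉ N p) ∧ ∀ p, v ∉ N p))
    (hcard : ∀ p, (insert (a p) (N p)).card ≤ k + 1) : HasTD G' k := by
  obtain ⟨T, TG, D, hD⟩ := hG
  choose s hs using fun p => D.covers_vertex (a p)
  let bag : T ⊕ P → Finset V :=
    Sum.elim (fun t => (D.bag t).filter fun v => ∀ p, v ∉ N p) (fun p => insert (a p) (N p))
  refine ⟨T ⊕ P, SimpleGraph.attachLeaves TG s, ⟨D.isTree.attachLeaves, bag, ?_, ?_, ?_⟩, ?_⟩
  · intro v
    by_cases hv : ∃ p, v ∈ N p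
    · obtain ⟨p, hp⟩ := hv
      exact ⟨.inr p, by simp [bag, hp]⟩
    · push Not at hv
      obtain ⟨t, ht⟩ := D.covers_vertex v
      exact ⟨.inl t, by simp [bag, ht, hv]⟩
  · intro u v huv
    rcases hadj u v huv with ⟨p, hu, hv⟩ | ⟨huv, hu, hv⟩
    · exact ⟨.inr p, hu, hv⟩
    · obtain ⟨t, htu, htv⟩ := D.covers_edge u v huv
      exact ⟨.inl t, by simp [bag, htu, htv, hu, hv]⟩
  · intro v
    by_cases hv : ∃ p, v ∈ N p
    · obtain ⟨p, hp⟩ := hv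
      have hnodes : {x | v ∈ bag x} = {.inr p} := by
        ext (t | q)
        · simpa [bag] using fun _ : v ∈ D.bag t => ⟨p, hp⟩
        · simp only [Set.mem_ofPred_eq, Sum.elim_inr, Finset.mem_insert, Set.mem_singleton_iff,
            Sum.inr.injEq, bag]
          exact ⟨fun h => h.elim (fun h => absurd (h ▸ hp) (ha q p)) (hN p q v hp) |>.symm,
            fun h => .inr (h ▸ hp)⟩
      rw [hnodes]
      exact SimpleGraph.induce_singleton_connected _ _
    · push Not at hv
      have hnodes : {x | v ∈ bag x} = Sum.inl '' {t | v ∈ D.bag t} ∪ Sum.inr '' {p | a p = v} := by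
        ext (t | q)
        · simp [bag, hv]
        · simp [bag, hv, eq_comm]
      rw [hnodes]
      exact SimpleGraph.attachLeaves_induce_connected (D.connected v) (fun p hp => hp ▸ hs p)
  · rintro (t | p)
    · exact (Finset.card_filter_le _ _).trans (hD t)
    · exact hcard p

end TreeDecomposition

section Implications

lemma mem_cnfVars {C : Finset Clause} {x : ℕ} : x ∈ cnfVars C ↔ ∃ c ∈ C, x ∈ c.varsOf := by
  simp [cnfVars]

lemma cnfVars_union (C D : Finset Clause) : cnfVars (C ∪ D) = cnfVars C ∪ cnfVars D :=
  Finset.union_biUnion ..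

lemma mem_satSets {C : Finset Clause} {A : Finset ℕ} :
    A ∈ satSets C ↔ A ⊆ cnfVars C ∧ ∀ c ∈ C, ∃ l ∈ c, (l.var ∈ A ↔ l.pos = true) := by
  simp [satSets]

def impClause (y x : ℕ) : Clause := {⟨y, false⟩, ⟨x, true⟩}

lemma varsOf_impClause (y x : ℕ) : (impClause y x).varsOf = {y, x} := by
  simp [impClause, Clause.varsOf]

lemma impClause_inj {y x y' x' : ℕ} (h : impClause y x = impClause y' x') : y = y' ∧ x = x' := by
  have hy : (⟨y, false⟩ : Lit) ∈ impClause y' x' := h ▸ by simp [impClause]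
  have hx : (⟨x, true⟩ : Lit) ∈ impClause y' x' := h ▸ by simp [impClause]
  simp_all [impClause]

variable (φ : Finset Clause) (Y : ℕ → Finset ℕ)

def implications : Finset Clause :=
  (cnfVars φ).biUnion fun x => (Y x).image (impClause · x)

variable {φ Y}

lemma mem_implications {c : Clause} :
    c ∈ implications φ Y ↔ ∃ x ∈ cnfVars φ, ∃ y ∈ Y x, c = impClause y x := by
  simp [implications, eq_comm]

lemma var_mem_cnfVars {C : Finset Clause} {c : Clause} {l : Lit} (hc : c ∈ C) (hl : l ∈ c) :
    l.var ∈ cnfVars C :=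
  mem_cnfVars.2 ⟨c, hc, Finset.mem_image_of_mem _ hl⟩

lemma satSets_inter_of_mem_satSets_union {D : Finset Clause} {A : Finset ℕ}
    (hA : A ∈ satSets (φ ∪ D)) : A ∩ cnfVars φ ∈ satSets φ := by
  refine mem_satSets.2 ⟨Finset.inter_subset_right, fun c hc => ?_⟩
  obtain ⟨l, hl, hlA⟩ := (mem_satSets.1 hA).2 c (Finset.mem_union_left _ hc)
  exact ⟨l, hl, by simpa [var_mem_cnfVars hc hl] using hlA⟩

lemma sdiff_subset_of_mem_satSets_union_implications {A : Finset ℕ}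
    (hA : A ∈ satSets (φ ∪ implications φ Y)) :
    A \ cnfVars φ ⊆ (A ∩ cnfVars φ).biUnion Y := by
  intro z hz
  obtain ⟨hzA, hzV⟩ := Finset.mem_sdiff.1 hz
  obtain ⟨hsub, hsat⟩ := mem_satSets.1 hA
  obtain ⟨c, hc, hzc⟩ := mem_cnfVars.1 (hsub hzA)
  obtain ⟨x, hx, y, hy, rfl⟩ := mem_implications.1
    ((Finset.mem_union.1 hc).resolve_left fun hc => hzV (mem_cnfVars.2 ⟨c, hc, hzc⟩))
  obtain rfl : z = y := by
    simp only [varsOf_impClause, Finset.mem_insert, Finset.mem_singleton] at hzc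
    exact hzc.resolve_right (by rintro rfl; exact hzV hx)
  have hxA : x ∈ A := by
    obtain ⟨l, hl, hlA⟩ := hsat _ hc
    simp only [impClause, Finset.mem_insert, Finset.mem_singleton] at hl
    rcases hl with rfl | rfl
    · exact absurd hzA (by simpa using hlA)
    · simpa using hlA
  exact Finset.mem_biUnion.2 ⟨x, Finset.mem_inter.2 ⟨hxA, hx⟩, hy⟩

lemma mem_satSets_union_implications_of_inter
    (hfresh : ∀ x ∈ cnfVars φ, Disjoint (Y x) (cnfVars φ))
    (hdisj : (cnfVars φ : Set ℕ).PairwiseDisjoint Y) {A : Finset ℕ}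
    (hS : A ∩ cnfVars φ ∈ satSets φ) (hZ : A \ cnfVars φ ⊆ (A ∩ cnfVars φ).biUnion Y) :
    A ∈ satSets (φ ∪ implications φ Y) := by
  refine mem_satSets.2 ⟨fun z hz => ?_, fun c hc => ?_⟩
  · rw [cnfVars_union]
    by_cases hzV : z ∈ cnfVars φ
    · exact Finset.mem_union_left _ hzV
    obtain ⟨x, hx, hzx⟩ := Finset.mem_biUnion.1 (hZ (Finset.mem_sdiff.2 ⟨hz, hzV⟩))
    refine Finset.mem_union_right _ (mem_cnfVars.2 ⟨impClause z x, ?_, by simp [varsOf_impClause]⟩)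
    exact mem_implications.2 ⟨x, (Finset.mem_inter.1 hx).2, z, hzx, rfl⟩
  rcases Finset.mem_union.1 hc with hc | hc
  · obtain ⟨l, hl, hlA⟩ := (mem_satSets.1 hS).2 c hc
    exact ⟨l, hl, by simpa [var_mem_cnfVars hc hl] using hlA⟩
  obtain ⟨x, hx, y, hy, rfl⟩ := mem_implications.1 hc
  by_cases hxA : x ∈ A
  · exact ⟨⟨x, true⟩, by simp [impClause], by simpa using hxA⟩
  refine ⟨⟨y, false⟩, by simp [impClause], ?_⟩
  suffices y ∉ A by simpa using this
  intro hyA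
  have hyV : y ∉ cnfVars φ := Finset.disjoint_left.1 (hfresh x hx) hy
  obtain ⟨x', hx', hyx'⟩ := Finset.mem_biUnion.1 (hZ (Finset.mem_sdiff.2 ⟨hyA, hyV⟩))
  obtain ⟨hx'A, hx'V⟩ := Finset.mem_inter.1 hx'
  exact hxA (hdisj.elim_finset hx hx'V y hy hyx' ▸ hx'A)

lemma mem_satSets_union_implications
    (hfresh : ∀ x ∈ cnfVars φ, Disjoint (Y x) (cnfVars φ))
    (hdisj : (cnfVars φ : Set ℕ).PairwiseDisjoint Y) {A : Finset ℕ} :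
    A ∈ satSets (φ ∪ implications φ Y) ↔
      A ∩ cnfVars φ ∈ satSets φ ∧ A \ cnfVars φ ⊆ (A ∩ cnfVars φ).biUnion Y :=
  ⟨fun hA => ⟨satSets_inter_of_mem_satSets_union hA,
      sdiff_subset_of_mem_satSets_union_implications hA⟩,
    fun ⟨hS, hZ⟩ => mem_satSets_union_implications_of_inter hfresh hdisj hS hZ⟩

lemma card_fiber_satSets_union_implications
    (hfresh : ∀ x ∈ cnfVars φ, Disjoint (Y x) (cnfVars φ))
    (hdisj : (cnfVars φ : Set ℕ).PairwiseDisjoint Y) {S : Finset ℕ} (hS : S ∈ satSets φ) :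
    ({A ∈ satSets (φ ∪ implications φ Y) | A ∩ cnfVars φ = S}).card = 2 ^ (S.biUnion Y).card := by
  have hSV := (mem_satSets.1 hS).1
  have hZV : ∀ z ∈ S.biUnion Y, z ∉ cnfVars φ := by
    simp only [Finset.mem_biUnion]
    rintro z ⟨x, hx, hz⟩
    exact Finset.disjoint_left.1 (hfresh x (hSV hx)) hz
  have hinter : ∀ B ⊆ S.biUnion Y, (S ∪ B) ∩ cnfVars φ = S := by
    intro B hB
    ext z
    have := @hB z
    grind
  have hsdiff : ∀ B ⊆ S.biUnion Y, (S ∪ B) \ cnfVars φ = B := by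
    intro B hB
    ext z
    have := @hB z
    grind
  rw [← Finset.card_powerset]
  refine Finset.card_nbij' (· \ cnfVars φ) (S ∪ ·) ?_ ?_ ?_ ?_
  · intro A hA
    obtain ⟨hAsat, rfl⟩ := Finset.mem_filter.1 hA
    exact Finset.mem_powerset.2 ((mem_satSets_union_implications hfresh hdisj).1 hAsat).2
  · intro B hB
    have hB := Finset.mem_powerset.1 hB
    refine Finset.mem_filter.2 ⟨(mem_satSets_union_implications hfresh hdisj).2 ?_, hinter B hB⟩
    rw [hinter B hB, hsdiff B hB]
    exact ⟨hS, hB⟩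
  · intro A hA
    obtain ⟨-, rfl⟩ := Finset.mem_filter.1 hA
    dsimp only
    rw [Finset.union_comm]
    exact Finset.sdiff_union_inter A _
  · intro B hB
    exact hsdiff B (Finset.mem_powerset.1 hB)

theorem card_satSets_union_implications
    (hfresh : ∀ x ∈ cnfVars φ, Disjoint (Y x) (cnfVars φ))
    (hdisj : (cnfVars φ : Set ℕ).PairwiseDisjoint Y) :
    (satSets (φ ∪ implications φ Y)).card = ∑ S ∈ satSets φ, 2 ^ ∑ x ∈ S, (Y x).card := by
  rw [Finset.card_eq_sum_card_fiberwise (f := (· ∩ cnfVars φ)) (t := satSets φ)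
    fun A hA => ((mem_satSets_union_implications hfresh hdisj).1 hA).1]
  refine Finset.sum_congr rfl fun S hS => ?_
  rw [card_fiber_satSets_union_implications hfresh hdisj hS,
    Finset.card_biUnion (hdisj.subset (by exact_mod_cast (mem_satSets.1 hS).1))]

end Implications

section IncidenceTreewidth

variable {φ : Finset Clause} {Y : ℕ → Finset ℕ}

lemma incOf_adj_inl_inr {C : Finset Clause} {x : ℕ} {c : Clause} :
    (incOf C).Adj (.inl x) (.inr c) ↔ c ∈ C ∧ x ∈ c.varsOf := by
  simp [incOf]

lemma incOf_adj_iff {C : Finset Clause} {u v : ℕ ⊕ Clause} :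
    (incOf C).Adj u v ↔ ∃ x c, c ∈ C ∧ x ∈ c.varsOf ∧
      (u = .inl x ∧ v = .inr c ∨ u = .inr c ∧ v = .inl x) := by
  rcases u with x | c <;> rcases v with x' | c' <;> simp [incOf, and_comm]

variable (φ Y) in
/-- Indexed by `(x, y)`: the fresh variable `y` and its clause `¬y ∨ x`, anchored at `x`. -/
def impGadget (p : {p : ℕ × ℕ // p.1 ∈ cnfVars φ ∧ p.2 ∈ Y p.1}) : Finset (ℕ ⊕ Clause) :=
  {.inl p.1.2, .inr (impClause p.1.2 p.1.1)}

lemma inl_notMem_impGadget (hfresh : ∀ x ∈ cnfVars φ, Disjoint (Y x) (cnfVars φ)) {x : ℕ}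
    (hx : x ∈ cnfVars φ) (p) : .inl x ∉ impGadget φ Y p := by
  obtain ⟨⟨x', y⟩, hx', hy⟩ := p
  simp only [impGadget, Finset.mem_insert, Finset.mem_singleton, reduceCtorEq, or_false,
    Sum.inl.injEq]
  rintro rfl
  exact Finset.disjoint_left.1 (hfresh x' hx') hy hx

lemma inr_notMem_impGadget (hfresh : ∀ x ∈ cnfVars φ, Disjoint (Y x) (cnfVars φ)) {c : Clause}
    (hc : c ∈ φ) (p) : .inr c ∉ impGadget φ Y p := by
  obtain ⟨⟨x', y⟩, hx', hy⟩ := p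
  simp only [impGadget, Finset.mem_insert, Finset.mem_singleton, reduceCtorEq, false_or,
    Sum.inr.injEq]
  rintro rfl
  exact Finset.disjoint_left.1 (hfresh x' hx') hy
    (mem_cnfVars.2 ⟨_, hc, by simp [varsOf_impClause]⟩)

lemma eq_of_mem_impGadget (hdisj : (cnfVars φ : Set ℕ).PairwiseDisjoint Y) {p q}
    {v : ℕ ⊕ Clause} (hp : v ∈ impGadget φ Y p) (hq : v ∈ impGadget φ Y q) : p = q := by
  obtain ⟨⟨x, y⟩, hx, hy⟩ := p
  obtain ⟨⟨x', y'⟩, hx', hy'⟩ := q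
  simp only [impGadget, Finset.mem_insert, Finset.mem_singleton] at hp hq
  rcases hp with rfl | rfl <;> rcases hq with h | h <;>
    simp only [reduceCtorEq, Sum.inl.injEq, Sum.inr.injEq] at h
  · subst h
    obtain rfl := hdisj.elim_finset hx hx' y hy hy'
    rfl
  · obtain ⟨rfl, rfl⟩ := impClause_inj h
    rfl

lemma incOf_union_implications_adj_inl_inr
    (hfresh : ∀ x ∈ cnfVars φ, Disjoint (Y x) (cnfVars φ)) {x : ℕ} {c : Clause}
    (h : (incOf (φ ∪ implications φ Y)).Adj (.inl x) (.inr c)) :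
    (∃ p, .inl x ∈ insert (.inl p.1.1) (impGadget φ Y p) ∧
        .inr c ∈ insert (.inl p.1.1) (impGadget φ Y p)) ∨
      ((incOf φ).Adj (.inl x) (.inr c) ∧ (∀ p, .inl x ∉ impGadget φ Y p) ∧
        ∀ p, .inr c ∉ impGadget φ Y p) := by
  obtain ⟨hc, hxc⟩ := incOf_adj_inl_inr.1 h
  rcases Finset.mem_union.1 hc with hc | hc
  · exact .inr ⟨incOf_adj_inl_inr.2 ⟨hc, hxc⟩,
      inl_notMem_impGadget hfresh (mem_cnfVars.2 ⟨c, hc, hxc⟩), inr_notMem_impGadget hfresh hc⟩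
  obtain ⟨x', hx', y, hy, rfl⟩ := mem_implications.1 hc
  refine .inl ⟨⟨⟨x', y⟩, hx', hy⟩, ?_, by simp [impGadget]⟩
  simp only [varsOf_impClause, Finset.mem_insert, Finset.mem_singleton] at hxc
  rcases hxc with rfl | rfl <;> simp [impGadget]

theorem tw_incOf_union_implications
    (hfresh : ∀ x ∈ cnfVars φ, Disjoint (Y x) (cnfVars φ))
    (hdisj : (cnfVars φ : Set ℕ).PairwiseDisjoint Y) :
    tw (incOf (φ ∪ implications φ Y)) ≤ tw (incOf φ) + 1 := by
  refine tw_le_tw_add 1 fun k hk => (hk.mono k.le_succ).attachGadgets (fun p => .inl p.1.1)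
    (impGadget φ Y) (fun _ _ _ => eq_of_mem_impGadget hdisj)
    (fun p => inl_notMem_impGadget hfresh p.2.1) ?_ ?_
  · intro u v huv
    obtain ⟨x, c, -, -, ⟨rfl, rfl⟩ | ⟨rfl, rfl⟩⟩ := incOf_adj_iff.1 huv
    · exact incOf_union_implications_adj_inl_inr hfresh huv
    · exact (incOf_union_implications_adj_inl_inr hfresh huv.symm).imp
        (Exists.imp fun _ => And.symm) fun ⟨h, hx, hc⟩ => ⟨h.symm, hc, hx⟩
  · rintro ⟨⟨x, y⟩, hx, hy⟩
    obtain ⟨c, hc, hxc⟩ := mem_cnfVars.1 hx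
    have hk1 := hk.one_le_of_adj (incOf_adj_inl_inr.2 ⟨hc, hxc⟩)
    exact Finset.card_le_three.trans (by omega : 3 ≤ k + 1 + 1)

end IncidenceTreewidth

section FreshVariables

def freshVars (s : Finset ℕ) (m : ℕ → ℕ) (x : ℕ) : Finset ℕ :=
  (Finset.range (m x)).image fun i => s.sup id + 1 + Nat.pair x i

variable (s : Finset ℕ) (m : ℕ → ℕ)

lemma card_freshVars (x : ℕ) : (freshVars s m x).card = m x := by
  refine (Finset.card_image_of_injective _ fun i j h => ?_).trans (Finset.card_range _)
  exact (Nat.pair_eq_pair.1 (Nat.add_left_cancel h)).2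

lemma disjoint_freshVars (x : ℕ) : Disjoint (freshVars s m x) s := by
  refine Finset.disjoint_left.2 fun z hz hzs => ?_
  obtain ⟨i, -, rfl⟩ := Finset.mem_image.1 hz
  have := Finset.le_sup (f := id) hzs
  simp only [id] at this
  omega

lemma pairwiseDisjoint_freshVars (t : Set ℕ) : t.PairwiseDisjoint (freshVars s m) := by
  intro x _ x' _ hne
  refine Finset.disjoint_left.2 fun z hz hz' => hne ?_
  obtain ⟨i, -, rfl⟩ := Finset.mem_image.1 hz
  obtain ⟨i', -, h⟩ := Finset.mem_image.1 hz'
  exact (Nat.pair_eq_pair.1 (Nat.add_left_cancel h)).1.symm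

end FreshVariables

/-- for a CNF `φ` with `n` variables and arbitrary natural variable weights
`w`, there is a CNF `φ'` (whose variables include those of `φ`) whose number of
satisfying assignments equals `Σ_{β ⊨ φ} 2^{w(β)·(n+1)}`, with `itw φ' ≤ itw φ + 1`. -/
theorem stmt16 (φ : Finset Clause) (w : ℕ → ℕ) :
    ∃ φ' : Finset Clause,
      cnfVars φ ⊆ cnfVars φ' ∧
      (satSets φ').card =
        ∑ S ∈ satSets φ, 2 ^ ((∑ x ∈ S, w x) * ((cnfVars φ).card + 1)) ∧
      tw (incOf φ') ≤ tw (incOf φ) + 1 := by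
  let Y := freshVars (cnfVars φ) fun x => w x * ((cnfVars φ).card + 1)
  have hfresh : ∀ x ∈ cnfVars φ, Disjoint (Y x) (cnfVars φ) := fun x _ => disjoint_freshVars ..
  have hdisj : (cnfVars φ : Set ℕ).PairwiseDisjoint Y := pairwiseDisjoint_freshVars ..
  refine ⟨φ ∪ implications φ Y, ?_, ?_, tw_incOf_union_implications hfresh hdisj⟩
  · rw [cnfVars_union]
    exact Finset.subset_union_left
  · simp only [card_satSets_union_implications hfresh hdisj, Y, card_freshVars, Finset.sum_mul]
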